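/- arXiv:2601.08642 — 8 statements merged into one kernel-verified Lean document; each statement's English description precedes it below -/
import Mathlib

section
/- Let u > 0 and let f : [0,u] → ℝ be nonnegative, continuous and concave with maximum value h > 0. Let ε ∈ [0,1] and set τ = ε·h. Then ∫_0^u (max(f(t), τ) − f(t)) dt ≤ (ε²/2)·u·h. -/
/-!
Let `c` be a point where `f` attains `h`. Concavity and nonnegativity put `f` above the tent of
height `h` over `[0, u]` with apex at `c`, so the shortfall `max (f t) τ - f t` is at most that of
the tent. Parametrising each side of the apex by `θ ∈ [0, 1]`, a side of length `ℓ` contributes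
at most `ℓ * h * ∫₀¹ max (ε - θ) 0 dθ = ℓ * ε ^ 2 / 2 * h`.
-/

open Set intervalIntegral

lemma integral_max_sub_zero_unitInterval {ε : ℝ} (hε : ε ∈ Icc (0 : ℝ) 1) :
    ∫ θ in (0 : ℝ)..1, max (ε - θ) 0 = ε ^ 2 / 2 := by
  have hcont : Continuous fun θ : ℝ ↦ max (ε - θ) 0 := by fun_prop
  rw [← integral_add_adjacent_intervals (b := ε) (hcont.intervalIntegrable _ _)
      (hcont.intervalIntegrable _ _),
    integral_congr (g := fun θ ↦ ε - θ) fun θ hθ ↦ max_eq_left (by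
      rw [uIcc_of_le hε.1] at hθ; linarith [hθ.2]),
    integral_congr (g := fun _ ↦ 0) fun θ hθ ↦ max_eq_right (by
      rw [uIcc_of_le hε.2] at hθ; linarith [hθ.1])]
  simp only [integral_sub intervalIntegrable_const intervalIntegrable_id, integral_const,
    integral_id, smul_eq_mul, integral_zero]
  ring

lemma integral_max_sub_le_of_mul_le {g : ℝ → ℝ} {h ε : ℝ} (hh : 0 ≤ h)
    (hε : ε ∈ Icc (0 : ℝ) 1) (hg_cont : ContinuousOn g (Icc 0 1))
    (hg : ∀ θ ∈ Icc (0 : ℝ) 1, θ * h ≤ g θ) :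
    ∫ θ in (0 : ℝ)..1, (max (g θ) (ε * h) - g θ) ≤ ε ^ 2 / 2 * h := calc
  _ ≤ ∫ θ in (0 : ℝ)..1, h * max (ε - θ) 0 := by
    refine integral_mono_on zero_le_one
      (((hg_cont.sup continuousOn_const).sub hg_cont).intervalIntegrable_of_Icc zero_le_one)
      ((by fun_prop : Continuous fun θ : ℝ ↦ h * max (ε - θ) 0).intervalIntegrable 0 1)
      fun θ hθ ↦ ?_
    rw [← max_sub_sub_right, sub_self, max_comm, mul_max_of_nonneg _ _ hh, mul_zero]
    exact max_le_max (by linarith [hg θ hθ]) le_rfl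
  _ = ε ^ 2 / 2 * h := by
    rw [integral_const_mul, integral_max_sub_zero_unitInterval hε, mul_comm]

lemma ConcaveOn.mul_le_apply_add_smul_sub {E : Type*} [AddCommGroup E] [Module ℝ E]
    {s : Set E} {f : E → ℝ} (hf : ConcaveOn ℝ s f) {x y : E} (hx : x ∈ s) (hy : y ∈ s)
    (hfx : 0 ≤ f x) {θ : ℝ} (hθ : θ ∈ Icc (0 : ℝ) 1) :
    θ * f y ≤ f (x + θ • (y - x)) := by
  have hchord := hf.2 hx hy (sub_nonneg.2 hθ.2) hθ.1 (sub_add_cancel 1 θ)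
  rw [smul_eq_mul, smul_eq_mul, sub_smul, one_smul, sub_add_eq_add_sub, ← add_sub,
    ← smul_sub] at hchord
  nlinarith [mul_nonneg (sub_nonneg.2 hθ.2) hfx]

lemma ConcaveOn.integral_max_sub_le_along_segment {s : Set ℝ} {f : ℝ → ℝ}
    (hf : ConcaveOn ℝ s f) (hf_cont : ContinuousOn f s) {x y ε : ℝ} (hx : x ∈ s)
    (hy : y ∈ s) (hfx : 0 ≤ f x) (hfy : 0 ≤ f y) (hε : ε ∈ Icc (0 : ℝ) 1) :
    ∫ θ in (0 : ℝ)..1, (max (f (x + (y - x) * θ)) (ε * f y) - f (x + (y - x) * θ)) ≤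
      ε ^ 2 / 2 * f y := by
  have hsegment : MapsTo (fun θ ↦ x + (y - x) * θ) (Icc 0 1) s := fun θ hθ ↦ by
    simpa only [smul_eq_mul, mul_comm] using hf.1.add_smul_sub_mem hx hy hθ
  refine integral_max_sub_le_of_mul_le hfy hε (hf_cont.comp (by fun_prop) hsegment)
    fun θ hθ ↦ ?_
  simpa only [smul_eq_mul, mul_comm θ] using hf.mul_le_apply_add_smul_sub hx hy hfx hθ

theorem rudimentary_strategy_cost_general
    (u : ℝ) (f : ℝ → ℝ)
    (hf_nonneg : ∀ t ∈ Set.Icc 0 u, 0 ≤ f t)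
    (hf_cont : ContinuousOn f (Set.Icc 0 u))
    (hf_conc : ConcaveOn ℝ (Set.Icc 0 u) f)
    (h : ℝ)
    (hh_max : IsGreatest (f '' Set.Icc 0 u) h)
    (ε : ℝ) (hε : ε ∈ Set.Icc (0 : ℝ) 1)
    (τ : ℝ) (hτ : τ = ε * h) :
    ∫ t in (0 : ℝ)..u, (max (f t) τ - f t) ≤ ε ^ 2 / 2 * u * h := by
  obtain ⟨c, hc, rfl⟩ := hh_max.1
  subst hτ
  set φ := fun t ↦ max (f t) (ε * f c) - f t
  have hu : (0 : ℝ) ≤ u := hc.1.trans hc.2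
  have hφ : IntervalIntegrable φ MeasureTheory.volume 0 u :=
    ((hf_cont.sup continuousOn_const).sub hf_cont).intervalIntegrable_of_Icc hu
  have reparam (x : ℝ) :
      ∫ t in x..c, φ t = (c - x) * ∫ θ in (0 : ℝ)..1, φ (x + (c - x) * θ) := by
    rw [← smul_eq_mul, smul_integral_comp_add_mul, mul_zero, mul_one, add_zero, add_sub_cancel]
  have bound {x : ℝ} (hx : x ∈ Icc 0 u) :
      ∫ θ in (0 : ℝ)..1, φ (x + (c - x) * θ) ≤ ε ^ 2 / 2 * f c :=
    hf_conc.integral_max_sub_le_along_segment hf_cont hx hc (hf_nonneg x hx) (hf_nonneg c hc) hε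
  have hc_mem : c ∈ uIcc 0 u := Icc_subset_uIcc hc
  rw [← integral_add_adjacent_intervals (hφ.mono_set (uIcc_subset_uIcc_left hc_mem))
    (hφ.mono_set (uIcc_subset_uIcc_right hc_mem)), integral_symm u c, reparam, reparam]
  have hleft := mul_le_mul_of_nonneg_left (bound (left_mem_Icc.2 hu)) hc.1
  have hright := mul_le_mul_of_nonneg_left (bound (right_mem_Icc.2 hu)) (sub_nonneg.2 hc.2)
  linarith

/-- The cost of the rudimentary strategy with target `τ = ε·h` applied to a
nonnegative, continuous, concave function `f` on `[0,u]` with maximum value `h > 0` is at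
most `(ε²/2)·u·h`. -/
theorem rudimentary_strategy_cost
    (u : ℝ) (hu : 0 < u) (f : ℝ → ℝ)
    (hf_nonneg : ∀ t ∈ Set.Icc 0 u, 0 ≤ f t)
    (hf_cont : ContinuousOn f (Set.Icc 0 u))
    (hf_conc : ConcaveOn ℝ (Set.Icc 0 u) f)
    (h : ℝ) (hh_pos : 0 < h)
    (hh_max : IsGreatest (f '' Set.Icc 0 u) h)
    (ε : ℝ) (hε : ε ∈ Set.Icc (0 : ℝ) 1)
    (τ : ℝ) (hτ : τ = ε * h) :
    ∫ t in (0 : ℝ)..u, (max (f t) τ - f t) ≤ ε ^ 2 / 2 * u * h :=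
  rudimentary_strategy_cost_general u f hf_nonneg hf_cont hf_conc h hh_max ε hε τ hτ
end

section
/- Let u > 0 and let f : [0,u] → ℝ be continuous and concave, with f(0) = ℓ and maximum value h attained at some σ ∈ [0,u], i.e. f(σ) = h = max_{t ∈ [0,u]} f(t). Let τ satisfy ℓ < τ ≤ h, and let α be the smallest point of [0,σ] with f(α) = τ (which exists by the intermediate value theorem). Then α ≤ (τ−ℓ)·σ/(h−ℓ), f(t) ≤ τ for all t ∈ [0,α], and ∫_0^α (τ − f(t)) dt ≤ σ·(τ−ℓ)²/(2(h−ℓ)). -/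
/-! Concavity puts `f` above its chord `t ↦ ℓ + m t` on `[0, σ]`, where `m = (h - ℓ)/σ`. At `α` this
gives `τ ≥ ℓ + m α`, i.e. the bound on `α`; under the integral it bounds the cost by
`∫_0^α (τ - ℓ - m t) dt = (τ - ℓ) α - m α² / 2`, a quadratic in `α` whose maximum is
`(τ - ℓ)² / (2m)`. That `f ≤ τ` before `α` is the intermediate value theorem: `f 0 = ℓ < τ`, so a
value above `τ` before `α` would force an earlier point where `f = τ`. -/

open Set

theorem ConcaveOn.add_mul_secant_le {𝕜 : Type*} [Field 𝕜] [LinearOrder 𝕜] [IsStrictOrderedRing 𝕜]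
    {s : Set 𝕜} {f : 𝕜 → 𝕜} (hf : ConcaveOn 𝕜 s f) {a b t : 𝕜} (ha : a ∈ s) (hb : b ∈ s)
    (hab : a < b) (ht : t ∈ Icc a b) :
    f a + (t - a) * ((f b - f a) / (b - a)) ≤ f t := by
  have hba : 0 < b - a := sub_pos.2 hab
  have hba' : b - a ≠ 0 := hba.ne'
  have key := hf.2 ha hb (div_nonneg (sub_nonneg.2 ht.2) hba.le)
    (div_nonneg (sub_nonneg.2 ht.1) hba.le) (by field_simp; ring)
  have hpoint : ((b - t) / (b - a)) • a + ((t - a) / (b - a)) • b = t := by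
    simp only [smul_eq_mul]; field_simp; ring
  rw [hpoint, smul_eq_mul, smul_eq_mul] at key
  calc f a + (t - a) * ((f b - f a) / (b - a))
      = (b - t) / (b - a) * f a + (t - a) / (b - a) * f b := by field_simp; ring
    _ ≤ f t := key

theorem ContinuousOn.forall_lt_of_forall_ne {f : ℝ → ℝ} {a b τ : ℝ}
    (hf : ContinuousOn f (Icc a b)) (ha : f a ≤ τ) (hne : ∀ t ∈ Ico a b, f t ≠ τ) :
    ∀ t ∈ Ico a b, f t < τ := by
  intro t ht
  by_contra! hge
  obtain ⟨s, hs, hfs⟩ : τ ∈ f '' Icc a t :=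
    intermediate_value_Icc ht.1 (hf.mono (Icc_subset_Icc_right ht.2.le)) ⟨ha, hge⟩
  exact hne s ⟨hs.1, hs.2.trans_lt ht.2⟩ hfs

theorem mul_sub_mul_sq_div_two_le {𝕜 : Type*} [Field 𝕜] [LinearOrder 𝕜] [IsStrictOrderedRing 𝕜]
    {m : 𝕜} (hm : 0 < m) (a x : 𝕜) : a * x - m * x ^ 2 / 2 ≤ a ^ 2 / (2 * m) := by
  rw [le_div_iff₀ (by positivity)]
  nlinarith [sq_nonneg (a - m * x)]

theorem integral_sub_le_of_affine_le {f : ℝ → ℝ} {c m τ α : ℝ} (hm : 0 < m) (hα : 0 ≤ α)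
    (hf : ContinuousOn f (Icc 0 α)) (hle : ∀ t ∈ Icc 0 α, c + t * m ≤ f t) :
    ∫ t in (0 : ℝ)..α, (τ - f t) ≤ (τ - c) ^ 2 / (2 * m) :=
  calc ∫ t in (0 : ℝ)..α, (τ - f t)
      ≤ ∫ t in (0 : ℝ)..α, ((τ - c) - m * t) := by
        refine intervalIntegral.integral_mono_on hα
          ((continuousOn_const.sub hf).intervalIntegrable_of_Icc hα)
          (Continuous.intervalIntegrable (by fun_prop) _ _) fun t ht => ?_
        linarith [hle t ht]
    _ = (τ - c) * α - m * α ^ 2 / 2 := by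
        rw [intervalIntegral.integral_sub intervalIntegrable_const
          (intervalIntegral.intervalIntegrable_id.const_mul m),
          intervalIntegral.integral_const_mul, integral_id, intervalIntegral.integral_const]
        simp only [smul_eq_mul]; ring
    _ ≤ (τ - c) ^ 2 / (2 * m) := mul_sub_mul_sq_div_two_le hm _ _

theorem rudimentary_strategy_left_cost_general
    (u : ℝ) (f : ℝ → ℝ)
    (hf_cont : ContinuousOn f (Set.Icc 0 u))
    (hf_conc : ConcaveOn ℝ (Set.Icc 0 u) f)
    (ℓ h σ : ℝ) (hℓ : f 0 = ℓ)
    (hσ_mem : σ ∈ Set.Icc 0 u) (hσ : f σ = h)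
    (τ : ℝ) (hτ_lo : ℓ < τ) (hτ_hi : τ ≤ h)
    (α : ℝ) (hα : IsLeast {t | t ∈ Set.Icc 0 σ ∧ f t = τ} α) :
    α ≤ (τ - ℓ) * σ / (h - ℓ) ∧
    (∀ t ∈ Set.Icc 0 α, f t ≤ τ) ∧
    ∫ t in (0 : ℝ)..α, (τ - f t) ≤ σ * (τ - ℓ) ^ 2 / (2 * (h - ℓ)) := by
  obtain ⟨⟨⟨hα0, hασ⟩, hfα⟩, hleast⟩ := hα
  have hhℓ : 0 < h - ℓ := by linarith
  have hσ0 : 0 < σ := hσ_mem.1.lt_of_ne (by rintro rfl; linarith)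
  set m := (h - ℓ) / σ with hm_def
  have hm : 0 < m := div_pos hhℓ hσ0
  have chord : ∀ t ∈ Icc 0 σ, ℓ + t * m ≤ f t := fun t ht => by
    simpa only [sub_zero, hℓ, hσ] using
      hf_conc.add_mul_secant_le ⟨le_rfl, hσ_mem.1.trans hσ_mem.2⟩ hσ_mem hσ0 ht
  have hαu : Icc 0 α ⊆ Icc 0 u := Icc_subset_Icc_right (hασ.trans hσ_mem.2)
  refine ⟨?_, ?_, ?_⟩
  · rw [le_div_iff₀ hhℓ]
    calc α * (h - ℓ) = α * m * σ := by rw [hm_def]; field_simp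
      _ ≤ (τ - ℓ) * σ := by gcongr; linarith [chord α ⟨hα0, hασ⟩]
  · intro t ht
    rcases ht.2.lt_or_eq with htα | rfl
    · refine ((hf_cont.mono hαu).forall_lt_of_forall_ne (hℓ ▸ hτ_lo.le) ?_ t ⟨ht.1, htα⟩).le
      exact fun s hs hfs => (hleast ⟨⟨hs.1, hs.2.le.trans hασ⟩, hfs⟩).not_gt hs.2
    · exact hfα.le
  · calc ∫ t in (0 : ℝ)..α, (τ - f t)
        ≤ (τ - ℓ) ^ 2 / (2 * m) :=
          integral_sub_le_of_affine_le hm hα0 (hf_cont.mono hαu) fun t ht =>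
            chord t ⟨ht.1, ht.2.trans hασ⟩
      _ = σ * (τ - ℓ) ^ 2 / (2 * (h - ℓ)) := by rw [hm_def]; field_simp

/-- For a continuous concave `f` on `[0,u]` with `f 0 = ℓ`, maximum value `h`
attained at `σ ∈ [0,u]`, and a target `τ` with `ℓ < τ ≤ h`, the least point `α` of `[0,σ]`
with `f α = τ` satisfies `α ≤ (τ-ℓ)·σ/(h-ℓ)`, `f ≤ τ` on `[0,α]`, and
`∫_0^α (τ - f) ≤ σ·(τ-ℓ)²/(2(h-ℓ))`. -/
theorem rudimentary_strategy_left_cost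
    (u : ℝ) (hu : 0 < u) (f : ℝ → ℝ)
    (hf_cont : ContinuousOn f (Set.Icc 0 u))
    (hf_conc : ConcaveOn ℝ (Set.Icc 0 u) f)
    (ℓ h σ : ℝ) (hℓ : f 0 = ℓ)
    (hσ_mem : σ ∈ Set.Icc 0 u) (hσ : f σ = h)
    (hh_max : ∀ t ∈ Set.Icc 0 u, f t ≤ h)
    (τ : ℝ) (hτ_lo : ℓ < τ) (hτ_hi : τ ≤ h)
    (α : ℝ) (hα : IsLeast {t | t ∈ Set.Icc 0 σ ∧ f t = τ} α) :
    α ≤ (τ - ℓ) * σ / (h - ℓ) ∧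
    (∀ t ∈ Set.Icc 0 α, f t ≤ τ) ∧
    ∫ t in (0 : ℝ)..α, (τ - f t) ≤ σ * (τ - ℓ) ^ 2 / (2 * (h - ℓ)) :=
  rudimentary_strategy_left_cost_general u f hf_cont hf_conc ℓ h σ hℓ hσ_mem hσ τ hτ_lo hτ_hi α hα
end

section
/- Consider an urban planning instance with opt > 0 and set h_i = max_{t ∈ [0,u_i]} f_i(t) and φ = (√5 − 1)/2 (the golden ratio conjugate). Suppose there is a critical location ℓ*, i.e. an index with u_{ℓ*}·h_{ℓ*} ≥ φ·opt, and let λ = u_{ℓ*}·h_{ℓ*}/opt. For ε ∈ (0,1], define g_{ℓ*}(t) = max(f_{ℓ*}(t), (ε/λ)·h_{ℓ*}) and g_i = f_i for every i ≠ ℓ*. Then the cost Σ_i ∫_0^{u_i} (g_i(t) − f_i(t)) dt is at most ((1+φ)/2)·ε²·opt ≤ 0.81·ε²·opt, and every Nash equilibrium x of the modified instance satisfies Σ_i x_i·g_i(x_i) ≥ ε·opt. -/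
lemma lin_integral (T c a : ℝ) : (∫ t in (0:ℝ)..a, (T - c * t)) = T * a - c * (a^2/2) := by
  rw [intervalIntegral.integral_sub intervalIntegrable_const
    ((by fun_prop : Continuous fun t:ℝ => c * t).intervalIntegrable 0 a),
    intervalIntegral.integral_const, intervalIntegral.integral_const_mul,
    integral_id]
  simp; ring

lemma clamp_linear_integral (T c b : ℝ) (hT : 0 ≤ T) (hc : 0 < c) (hb : 0 ≤ b) :
    (∫ t in (0:ℝ)..b, max 0 (T - c * t)) ≤ T ^ 2 / (2 * c) := by
  have hcont : Continuous fun t:ℝ => max 0 (T - c * t) := by fun_prop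
  by_cases hcase : b ≤ T / c
  · have heq : Set.EqOn (fun t => max 0 (T - c * t)) (fun t => T - c * t) (Set.uIcc 0 b) := by
      intro t ht
      rw [Set.uIcc_of_le hb] at ht
      have h1 : t * c ≤ T := le_trans (by nlinarith [ht.2]) ((le_div_iff₀ hc).mp hcase)
      simp only [max_eq_right (by nlinarith : (0:ℝ) ≤ T - c * t)]
    rw [intervalIntegral.integral_congr heq, lin_integral]
    have hcb : b * c ≤ T := (le_div_iff₀ hc).mp hcase
    rw [le_div_iff₀ (by positivity : (0:ℝ) < 2 * c)]
    nlinarith [sq_nonneg (T - c * b)]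
  · push_neg at hcase
    have ha : 0 ≤ T / c := by positivity
    have hab : T / c ≤ b := le_of_lt hcase
    rw [← intervalIntegral.integral_add_adjacent_intervals (a := 0) (b := T/c) (c := b)
      (hcont.intervalIntegrable _ _) (hcont.intervalIntegrable _ _)]
    have h2 : (∫ t in (T/c)..b, max 0 (T - c * t)) = 0 := by
      have heq : Set.EqOn (fun t => max 0 (T - c * t)) (fun _ => (0:ℝ)) (Set.uIcc (T/c) b) := by
        intro t ht
        rw [Set.uIcc_of_le hab] at ht
        have h1 : T ≤ c * t := by
          have := (div_le_iff₀ hc).mp ht.1; linarith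
        simp only [max_eq_left (by linarith : T - c * t ≤ 0)]
      rw [intervalIntegral.integral_congr heq]; simp
    have h1 : (∫ t in (0:ℝ)..(T/c), max 0 (T - c * t)) = T^2/(2*c) := by
      have heq : Set.EqOn (fun t => max 0 (T - c * t)) (fun t => T - c * t) (Set.uIcc 0 (T/c)) := by
        intro t ht
        rw [Set.uIcc_of_le ha] at ht
        have h1 : c * t ≤ T := by
          have := (le_div_iff₀ hc).mp ht.2; linarith
        simp only [max_eq_right (by linarith : (0:ℝ) ≤ T - c * t)]
      rw [intervalIntegral.integral_congr heq, lin_integral]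
      field_simp
      ring
    rw [h1, h2]; linarith

lemma max_sub_self (a b : ℝ) : max a b - a = max 0 (b - a) := by
  rcases le_total a b with h | h
  · rw [max_eq_right h, max_eq_right (by linarith)]
  · rw [max_eq_left h, max_eq_left (by linarith)]; ring

lemma piece_bound (b T hm : ℝ) (f : ℝ → ℝ) (hb : 0 < b) (hT : 0 ≤ T) (hm0 : 0 < hm)
    (hfc : ContinuousOn f (Set.Icc 0 b))
    (hlow : ∀ t ∈ Set.Icc (0:ℝ) b, hm / b * t ≤ f t) :
    (∫ t in (0:ℝ)..b, (max (f t) T - f t)) ≤ T ^ 2 * b / (2 * hm) := by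
  have hc : (0:ℝ) < hm / b := by positivity
  have hint1 : IntervalIntegrable (fun t => max (f t) T - f t) MeasureTheory.volume 0 b := by
    apply ContinuousOn.intervalIntegrable
    rw [Set.uIcc_of_le hb.le]
    exact (hfc.sup continuousOn_const).sub hfc
  have hint2 : IntervalIntegrable (fun t => max 0 (T - hm / b * t)) MeasureTheory.volume 0 b :=
    (by fun_prop : Continuous fun t:ℝ => max 0 (T - hm / b * t)).intervalIntegrable _ _
  have hmono : (∫ t in (0:ℝ)..b, (max (f t) T - f t)) ≤
      ∫ t in (0:ℝ)..b, max 0 (T - hm / b * t) := by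
    apply intervalIntegral.integral_mono_on hb.le hint1 hint2
    intro t ht
    rw [max_sub_self]
    exact max_le_max le_rfl (by linarith [hlow t ht])
  calc _ ≤ ∫ t in (0:ℝ)..b, max 0 (T - hm / b * t) := hmono
    _ ≤ T ^ 2 / (2 * (hm / b)) := clamp_linear_integral T (hm/b) b hT hc hb.le
    _ = T ^ 2 * b / (2 * hm) := by field_simp
lemma location_bound (U T hm : ℝ) (f : ℝ → ℝ) (hU : 0 < U) (hT : 0 ≤ T) (hm0 : 0 < hm)
    (hfc : ContinuousOn f (Set.Icc 0 U)) (hf0 : ∀ t ∈ Set.Icc (0:ℝ) U, 0 ≤ f t)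
    (hconc : ConcaveOn ℝ (Set.Icc 0 U) f)
    (ts : ℝ) (hts : ts ∈ Set.Icc (0:ℝ) U) (hfts : f ts = hm) :
    (∫ t in (0:ℝ)..U, (max (f t) T - f t)) ≤ T ^ 2 * U / (2 * hm) := by
  obtain ⟨hts0, htsU⟩ := hts
  have hint : ∀ a b : ℝ, a ∈ Set.Icc (0:ℝ) U → b ∈ Set.Icc (0:ℝ) U →
      IntervalIntegrable (fun t => max (f t) T - f t) MeasureTheory.volume a b := by
    intro a b ha hb
    apply ContinuousOn.intervalIntegrable
    apply ContinuousOn.mono ((hfc.sup continuousOn_const).sub hfc)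
    exact Set.uIcc_subset_Icc ha hb
  rw [← intervalIntegral.integral_add_adjacent_intervals (a := 0) (b := ts) (c := U)
    (hint 0 ts ⟨le_rfl, hU.le⟩ ⟨hts0, htsU⟩) (hint ts U ⟨hts0, htsU⟩ ⟨hU.le, le_rfl⟩)]
  have hleft : (∫ t in (0:ℝ)..ts, (max (f t) T - f t)) ≤ T ^ 2 * ts / (2 * hm) := by
    rcases eq_or_lt_of_le hts0 with heq | hlt
    · rw [← heq, intervalIntegral.integral_same]; norm_num
    · apply piece_bound ts T hm f hlt hT hm0 (hfc.mono (Set.Icc_subset_Icc le_rfl htsU))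
      intro t ht
      obtain ⟨ht0, htts⟩ := ht
      have hd1 : t / ts ≤ 1 := (div_le_one hlt).2 htts
      have hd0 : (0:ℝ) ≤ t / ts := div_nonneg ht0 hlt.le
      have key := hconc.2 (Set.left_mem_Icc.2 hU.le) (⟨hts0, htsU⟩ : ts ∈ Set.Icc (0:ℝ) U)
        (show (0:ℝ) ≤ 1 - t / ts by linarith)
        (show (0:ℝ) ≤ t / ts from hd0)
        (show (1 - t / ts) + t / ts = 1 by ring)
      simp only [smul_eq_mul, mul_zero, smul_zero, zero_add] at key
      have harg : t / ts * ts = t := div_mul_cancel₀ t hlt.ne'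
      rw [harg] at key
      have hf00 : 0 ≤ f 0 := hf0 0 ⟨le_rfl, hU.le⟩
      have heq2 : hm / ts * t = t / ts * hm := by ring
      rw [heq2, ← hfts]
      nlinarith
  have hright : (∫ t in ts..U, (max (f t) T - f t)) ≤ T ^ 2 * (U - ts) / (2 * hm) := by
    rcases eq_or_lt_of_le htsU with heq | hlt
    · rw [heq, intervalIntegral.integral_same]; norm_num
    · have hsub : (∫ s in (0:ℝ)..(U - ts), (fun t => max (f t) T - f t) (U - s)) =
          ∫ t in ts..U, (max (f t) T - f t) := by
        rw [intervalIntegral.integral_comp_sub_left (fun t => max (f t) T - f t) U]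
        norm_num
      rw [← hsub]
      have hb : (0:ℝ) < U - ts := by linarith
      apply piece_bound (U - ts) T hm (fun s => f (U - s)) hb hT hm0
      · apply hfc.comp (continuousOn_const.sub continuousOn_id)
        intro s hs
        obtain ⟨hs0, hs1⟩ := hs
        exact ⟨by simp; linarith, by simp; linarith⟩
      · intro s hs
        obtain ⟨hs0, hs1⟩ := hs
        have h1 : s / (U - ts) ≤ 1 := (div_le_one hb).2 hs1
        have h2 : (0:ℝ) ≤ s / (U - ts) := div_nonneg hs0 hb.le
        have key := hconc.2 (⟨hts0, htsU⟩ : ts ∈ Set.Icc (0:ℝ) U)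
          (Set.right_mem_Icc.2 hU.le : U ∈ Set.Icc (0:ℝ) U)
          (show (0:ℝ) ≤ s / (U - ts) from h2)
          (show (0:ℝ) ≤ 1 - s / (U - ts) by linarith)
          (show s / (U - ts) + (1 - s / (U - ts)) = 1 by ring)
        simp only [smul_eq_mul] at key
        have harg : s / (U - ts) * ts + (1 - s / (U - ts)) * U = U - s := by
          field_simp; ring
        rw [harg, hfts] at key
        have hfU : 0 ≤ f U := hf0 U ⟨hU.le, le_rfl⟩
        have heq2 : hm / (U - ts) * s = s / (U - ts) * hm := by ring
        show hm / (U - ts) * s ≤ f (U - s)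
        rw [heq2]
        nlinarith
  have hsum : T ^ 2 * ts / (2 * hm) + T ^ 2 * (U - ts) / (2 * hm) = T ^ 2 * U / (2 * hm) := by
    field_simp; ring
  linarith


/-- If there is a critical location `ℓ*` (i.e. `u_{ℓ*}·h_{ℓ*} ≥ φ·opt` where
`φ = (√5-1)/2`), then raising `f_{ℓ*}` to the target `(ε/λ)·h_{ℓ*}`, where
`λ = u_{ℓ*}·h_{ℓ*}/opt`, costs at most `((1+φ)/2)·ε²·opt ≤ 0.81·ε²·opt` and every Nash
equilibrium of the modified instance has welfare at least `ε·opt`. -/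
theorem critical_location_case
    (n : ℕ) (u : Fin n → ℝ) (hu : ∀ i, 0 < u i)
    (f : Fin n → ℝ → ℝ)
    (hf_nonneg : ∀ i, ∀ t ∈ Set.Icc 0 (u i), 0 ≤ f i t)
    (hf_cont : ∀ i, ContinuousOn (f i) (Set.Icc 0 (u i)))
    (hf_conc : ∀ i, ConcaveOn ℝ (Set.Icc 0 (u i)) (f i))
    (N : ℝ) (hN_lo : ∀ i, u i ≤ N) (hN_hi : N ≤ ∑ i, u i)
    (opt : ℝ)
    (hopt : IsGreatest {w : ℝ | ∃ x : Fin n → ℝ,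
      (∀ i, x i ∈ Set.Icc 0 (u i)) ∧ (∑ i, x i) = N ∧
      w = ∑ i, x i * f i (x i)} opt)
    (hopt_pos : 0 < opt)
    (h : Fin n → ℝ) (hh : ∀ i, IsGreatest (f i '' Set.Icc 0 (u i)) (h i))
    (φ : ℝ) (hφ : φ = (Real.sqrt 5 - 1) / 2)
    (ℓstar : Fin n) (hcrit : φ * opt ≤ u ℓstar * h ℓstar)
    (lam : ℝ) (hlam : lam = u ℓstar * h ℓstar / opt)
    (ε : ℝ) (hε : ε ∈ Set.Ioc (0 : ℝ) 1)
    (g : Fin n → ℝ → ℝ)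
    (hg_star : ∀ t, g ℓstar t = max (f ℓstar t) (ε / lam * h ℓstar))
    (hg_other : ∀ i, i ≠ ℓstar → g i = f i) :
    ((∑ i, ∫ t in (0 : ℝ)..(u i), (g i t - f i t)) ≤ (1 + φ) / 2 * ε ^ 2 * opt ∧
      (1 + φ) / 2 * ε ^ 2 * opt ≤ 0.81 * ε ^ 2 * opt) ∧
    (∀ x : Fin n → ℝ,
      (∀ i, x i ∈ Set.Icc 0 (u i)) → (∑ i, x i) = N →
      (∀ i j, 0 < x i → x j < u j → g j (x j) ≤ g i (x i)) →
      ε * opt ≤ ∑ i, x i * g i (x i)) := by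
  obtain ⟨hε0, hε1⟩ := hε
  have hs5 : Real.sqrt 5 ^ 2 = 5 := Real.sq_sqrt (by norm_num)
  have hs5n : 0 ≤ Real.sqrt 5 := Real.sqrt_nonneg 5
  have hs5lo : (2:ℝ) ≤ Real.sqrt 5 := by nlinarith
  have hs5hi : Real.sqrt 5 ≤ 2.24 := by nlinarith
  have hφpos : 0 < φ := by rw [hφ]; linarith
  have hφ1 : φ * (1 + φ) = 1 := by rw [hφ]; nlinarith
  have huℓ : 0 < u ℓstar := hu ℓstar
  have hhℓ : 0 < h ℓstar := by nlinarith [mul_pos hφpos hopt_pos]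
  have hlampos : 0 < lam := by rw [hlam]; positivity
  have hlamφ : φ ≤ lam := by rw [hlam, le_div_iff₀ hopt_pos]; linarith
  have hTeq : ε / lam * h ℓstar = ε * opt / u ℓstar := by
    rw [hlam]; field_simp
  have hTpos : 0 < ε * opt / u ℓstar := by positivity
  have hgs : ∀ t, g ℓstar t = max (f ℓstar t) (ε * opt / u ℓstar) := by
    intro t; rw [hg_star t, hTeq]
  have huT : u ℓstar * (ε * opt / u ℓstar) = ε * opt := by field_simp
  constructor
  · constructor
    · -- cost bound
      have hzero : ∀ i ∈ Finset.univ, i ≠ ℓstar →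
          (∫ t in (0:ℝ)..(u i), (g i t - f i t)) = 0 := by
        intro i _ hi
        simp [hg_other i hi]
      rw [Finset.sum_eq_single_of_mem ℓstar (Finset.mem_univ _) hzero]
      have hint : (∫ t in (0:ℝ)..(u ℓstar), (g ℓstar t - f ℓstar t)) =
          ∫ t in (0:ℝ)..(u ℓstar),
            (max (f ℓstar t) (ε * opt / u ℓstar) - f ℓstar t) := by
        apply intervalIntegral.integral_congr
        intro t _
        show g ℓstar t - f ℓstar t = _
        rw [hgs t]
      rw [hint]
      obtain ⟨ts, hts, hfts⟩ := (hh ℓstar).1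
      have hloc := location_bound (u ℓstar) (ε * opt / u ℓstar) (h ℓstar) (f ℓstar)
        huℓ hTpos.le hhℓ (hf_cont ℓstar) (hf_nonneg ℓstar) (hf_conc ℓstar) ts hts hfts
      have e1 : (ε * opt / u ℓstar) ^ 2 * u ℓstar / (2 * h ℓstar) =
          ε ^ 2 * opt ^ 2 / (2 * (u ℓstar * h ℓstar)) := by
        field_simp
      have e2 : ε ^ 2 * opt ^ 2 / (2 * (u ℓstar * h ℓstar)) ≤
          ε ^ 2 * opt ^ 2 / (2 * (φ * opt)) := by
        gcongr <;> first | positivity | nlinarith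
      have e3 : ε ^ 2 * opt ^ 2 / (2 * (φ * opt)) ≤ (1 + φ) / 2 * ε ^ 2 * opt := by
        rw [div_le_iff₀ (by positivity : (0:ℝ) < 2 * (φ * opt))]
        nlinarith [hφ1, sq_nonneg (ε * opt), sq_nonneg ε, hopt_pos, mul_pos (mul_pos hε0 hε0) (mul_pos hopt_pos hopt_pos)]
      rw [e1] at hloc
      linarith
    · have h81 : (1 + φ) / 2 ≤ 0.81 := by rw [hφ]; linarith
      nlinarith [sq_nonneg ε, mul_nonneg (sq_nonneg ε) hopt_pos.le]
  · -- Nash part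
    intro x hx hsum hnash
    have hTle : ∀ t, ε * opt / u ℓstar ≤ g ℓstar t := by
      intro t; rw [hgs t]; exact le_max_right _ _
    have hgnonneg : ∀ i, 0 ≤ x i * g i (x i) := by
      intro i
      by_cases hi : i = ℓstar
      · subst hi
        exact mul_nonneg (hx i).1 (le_trans hTpos.le (hTle (x i)))
      · rw [hg_other i hi]
        exact mul_nonneg (hx i).1 (hf_nonneg i (x i) (hx i))
    by_cases hcase : x ℓstar < u ℓstar
    · have hterm : ∀ i, x i * (ε * opt / u ℓstar) ≤ x i * g i (x i) := by
        intro i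
        rcases eq_or_lt_of_le (hx i).1 with h0 | h0
        · rw [← h0]; simp
        · exact mul_le_mul_of_nonneg_left
            (le_trans (hTle (x ℓstar)) (hnash i ℓstar h0 hcase)) (hx i).1
      have hsum2 : N * (ε * opt / u ℓstar) ≤ ∑ i, x i * g i (x i) := by
        calc N * (ε * opt / u ℓstar) = (∑ i, x i) * (ε * opt / u ℓstar) := by rw [hsum]
          _ = ∑ i, x i * (ε * opt / u ℓstar) := by rw [Finset.sum_mul]
          _ ≤ ∑ i, x i * g i (x i) := Finset.sum_le_sum (fun i _ => hterm i)
      have hNT : u ℓstar * (ε * opt / u ℓstar) ≤ N * (ε * opt / u ℓstar) :=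
        mul_le_mul_of_nonneg_right (hN_lo ℓstar) hTpos.le
      rw [huT] at hNT
      linarith
    · push_neg at hcase
      have hxℓ : x ℓstar = u ℓstar := le_antisymm (hx ℓstar).2 hcase
      have hterm : ε * opt ≤ x ℓstar * g ℓstar (x ℓstar) := by
        rw [← huT, hxℓ]
        exact mul_le_mul_of_nonneg_left (hTle (u ℓstar)) huℓ.le
      calc ε * opt ≤ x ℓstar * g ℓstar (x ℓstar) := hterm
        _ ≤ ∑ i, x i * g i (x i) :=
          Finset.single_le_sum (fun i _ => hgnonneg i) (Finset.mem_univ ℓstar)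
end

section
/- Consider an urban planning instance with opt > 0, set h_i = max_{t ∈ [0,u_i]} f_i(t) and φ = (√5 − 1)/2, and suppose the locations are ordered so that h_1 ≥ h_2 ≥ ⋯ ≥ h_n. Assume there is no critical location, i.e. u_i·h_i < φ·opt for every i. Let k* = min{k : Σ_{i=1}^{k} u_i·h_i ≥ opt} (which exists since Σ_{i=1}^n u_i·h_i ≥ opt). For ε ∈ (0,1], define g_i(t) = max(f_i(t), ε·h_i) for i ≤ k* and g_i = f_i for i > k*. Then the cost Σ_i ∫_0^{u_i} (g_i(t) − f_i(t)) dt is at most ((1+φ)/2)·ε²·opt ≤ 0.81·ε²·opt, and every Nash equilibrium x of the modified instance satisfies Σ_i x_i·g_i(x_i) ≥ ε·opt. -/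
/-!
Cost: a concave `f ≥ 0` with maximum `h` at `t₀` lies above the tent through `(0, 0)`, `(t₀, h)`
and `(u, 0)`, so raising it to `ε h` costs at most the area between `ε h` and the tent, which is
`ε² u h / 2`. Summed over the first `k*` locations this is `ε² / 2 · ∑_{i < k*} u_i h_i`, and by
minimality of `k*` and the absence of a critical location that sum is below `opt + φ opt`.

Welfare: if the first `k*` locations are full, each contributes at least `ε u_i h_i`. Otherwise
let `j` be the first of them that is not full. By the equilibrium condition every occupied `i ≥ j`
has `g_i(x_i) ≥ g_j(x_j) ≥ ε h_j`, so the welfare is at least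
`ε (∑_{i < j} u_i h_i + h_j (N - ∑_{i < j} u_i))`. Since the `h_i` decrease, this bracket is the
fractional-knapsack bound on `∑ y_i h_i ≥ ∑ y_i f_i(y_i)` over configurations `y`, hence on `opt`.
-/

open MeasureTheory

section

open Set

lemma ConcaveOn.mul_le_apply_add_mul_sub {s : Set ℝ} {f : ℝ → ℝ} (hf : ConcaveOn ℝ s f)
    {a x θ : ℝ} (ha : a ∈ s) (hfa : 0 ≤ f a) (hx : x ∈ s) (hθ : θ ∈ Icc (0 : ℝ) 1) :
    θ * f x ≤ f (a + θ * (x - a)) := by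
  have key := hf.2 hx ha hθ.1 (sub_nonneg.2 hθ.2) (add_sub_cancel θ 1)
  simp only [smul_eq_mul] at key
  calc θ * f x ≤ θ * f x + (1 - θ) * f a :=
        le_add_of_nonneg_right (mul_nonneg (sub_nonneg.2 hθ.2) hfa)
    _ ≤ f (θ * x + (1 - θ) * a) := key
    _ = f (a + θ * (x - a)) := by ring_nf

lemma ContinuousOn.intervalIntegrable_max_sub {f : ℝ → ℝ} {a b p q : ℝ}
    (hf : ContinuousOn f (Icc a b)) (d : ℝ) (hp : p ∈ Icc a b) (hq : q ∈ Icc a b) :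
    IntervalIntegrable (fun t => max (f t) d - f t) volume p q :=
  (((hf.sup continuousOn_const).sub hf).mono (uIcc_subset_Icc hp hq)).intervalIntegrable

lemma integral_max_sub_le_of_chord_le {f : ℝ → ℝ} {b c ε : ℝ} (hb : 0 ≤ b) (hc : 0 ≤ c)
    (hε : ε ∈ Icc (0 : ℝ) 1) (hf : ContinuousOn f (Icc 0 b))
    (hchord : ∀ θ ∈ Icc (0 : ℝ) 1, θ * c ≤ f (θ * b)) :
    ∫ t in (0 : ℝ)..b, (max (f t) (ε * c) - f t) ≤ ε ^ 2 * c * b / 2 := by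
  rcases hb.eq_or_lt with rfl | hb
  · simp
  set s := ε * b
  have hs : s ∈ Icc 0 b := ⟨mul_nonneg hε.1 hb.le, mul_le_of_le_one_left hb.le hε.2⟩
  have hsc : s * (c / b) = ε * c := by simp only [s]; field_simp
  have hcb : 0 ≤ c / b := div_nonneg hc hb.le
  have hle : ∀ t ∈ Icc 0 b, max (f t) (ε * c) - f t ≤ max 0 (ε * c - t * (c / b)) := by
    intro t ht
    have := hchord (t / b) ⟨div_nonneg ht.1 hb.le, (div_le_one hb).2 ht.2⟩
    rw [div_mul_cancel₀ t hb.ne', div_mul_eq_mul_div, mul_div_assoc] at this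
    rw [← max_sub_sub_right, sub_self]
    exact max_le_max le_rfl (by linarith)
  have hleft : ∫ t in (0 : ℝ)..s, (max (f t) (ε * c) - f t) ≤
      ∫ t in (0 : ℝ)..s, (ε * c - t * (c / b)) := by
    refine intervalIntegral.integral_mono_on hs.1
      (hf.intervalIntegrable_max_sub _ ⟨le_rfl, hb.le⟩ hs)
      (Continuous.intervalIntegrable (by fun_prop) _ _) fun t ht => ?_
    refine (hle t ⟨ht.1, ht.2.trans hs.2⟩).trans (max_le ?_ le_rfl)
    linarith [mul_le_mul_of_nonneg_right ht.2 hcb]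
  have hright : ∫ t in s..b, (max (f t) (ε * c) - f t) ≤ ∫ t in s..b, (0 : ℝ) := by
    refine intervalIntegral.integral_mono_on hs.2
      (hf.intervalIntegrable_max_sub _ hs ⟨hb.le, le_rfl⟩)
      intervalIntegrable_const fun t ht => ?_
    refine (hle t ⟨hs.1.trans ht.1, ht.2⟩).trans (max_le le_rfl ?_)
    linarith [mul_le_mul_of_nonneg_right ht.1 hcb]
  have hval : ∫ t in (0 : ℝ)..s, (ε * c - t * (c / b)) = ε ^ 2 * c * b / 2 := by
    simp [intervalIntegral.integral_sub, intervalIntegral.integral_mul_const, integral_id, s]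
    field_simp
    ring
  rw [intervalIntegral.integral_zero] at hright
  rw [← intervalIntegral.integral_add_adjacent_intervals
    (hf.intervalIntegrable_max_sub _ ⟨le_rfl, hb.le⟩ hs)
    (hf.intervalIntegrable_max_sub _ hs ⟨hb.le, le_rfl⟩)]
  linarith

lemma integral_max_sub_le_of_concaveOn {f : ℝ → ℝ} {u c ε : ℝ} (hu : 0 ≤ u)
    (hε : ε ∈ Icc (0 : ℝ) 1) (hf : ContinuousOn f (Icc 0 u)) (hconc : ConcaveOn ℝ (Icc 0 u) f)
    (hf0 : 0 ≤ f 0) (hfu : 0 ≤ f u) (hmax : IsGreatest (f '' Icc 0 u) c) :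
    ∫ t in (0 : ℝ)..u, (max (f t) (ε * c) - f t) ≤ ε ^ 2 * u * c / 2 := by
  obtain ⟨t₀, ht₀, rfl⟩ := hmax.1
  have h0 : (0 : ℝ) ∈ Icc 0 u := ⟨le_rfl, hu⟩
  have hu' : u ∈ Icc 0 u := ⟨hu, le_rfl⟩
  have hc : 0 ≤ f t₀ := hf0.trans (hmax.2 ⟨0, h0, rfl⟩)
  have hleft : ∫ t in (0 : ℝ)..t₀, (max (f t) (ε * f t₀) - f t) ≤ ε ^ 2 * f t₀ * t₀ / 2 :=
    integral_max_sub_le_of_chord_le ht₀.1 hc hε (hf.mono (Icc_subset_Icc le_rfl ht₀.2))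
      fun θ hθ => by simpa using hconc.mul_le_apply_add_mul_sub h0 hf0 ht₀ hθ
  -- the decreasing side is the increasing side of the reflection `s ↦ f (u - s)`
  have hright : ∫ t in t₀..u, (max (f t) (ε * f t₀) - f t) ≤ ε ^ 2 * f t₀ * (u - t₀) / 2 := by
    have := integral_max_sub_le_of_chord_le (f := fun s => f (u - s)) (sub_nonneg.2 ht₀.2) hc hε
      (hf.comp (by fun_prop) fun s hs => ⟨by linarith [hs.2, ht₀.1], by linarith [hs.1]⟩)
      fun θ hθ => by
        convert hconc.mul_le_apply_add_mul_sub hu' hfu ht₀ hθ using 2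
        ring
    rwa [intervalIntegral.integral_comp_sub_left (fun t => max (f t) (ε * f t₀) - f t) u,
      sub_sub_cancel, sub_zero] at this
  rw [← intervalIntegral.integral_add_adjacent_intervals
    (hf.intervalIntegrable_max_sub _ h0 ht₀) (hf.intervalIntegrable_max_sub _ ht₀ hu')]
  linarith

end

open Finset

lemma sum_integral_sub_le_mul_sum {n k : ℕ} {u h : ℕ → ℝ} {f g : ℕ → ℝ → ℝ} {ε : ℝ}
    (hkn : k ≤ n) (hε : ε ∈ Set.Icc (0 : ℝ) 1) (hu : ∀ i < n, 0 ≤ u i)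
    (hf_nonneg : ∀ i < n, ∀ t ∈ Set.Icc 0 (u i), 0 ≤ f i t)
    (hf_cont : ∀ i < n, ContinuousOn (f i) (Set.Icc 0 (u i)))
    (hf_conc : ∀ i < n, ConcaveOn ℝ (Set.Icc 0 (u i)) (f i))
    (hh : ∀ i < n, IsGreatest (f i '' Set.Icc 0 (u i)) (h i))
    (hg_low : ∀ i < k, ∀ t, g i t = max (f i t) (ε * h i)) (hg_high : ∀ i, k ≤ i → g i = f i) :
    ∑ i ∈ range n, ∫ t in (0 : ℝ)..(u i), (g i t - f i t) ≤
      ε ^ 2 / 2 * ∑ i ∈ range k, u i * h i := by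
  rw [← sum_range_add_sum_Ico _ hkn,
    sum_eq_zero (s := Ico k n) fun i hi => by simp [hg_high i (mem_Ico.1 hi).1], add_zero, mul_sum]
  refine sum_le_sum fun i hi => ?_
  have hik := mem_range.1 hi
  have hin : i < n := hik.trans_le hkn
  have h0 : (0 : ℝ) ∈ Set.Icc 0 (u i) := ⟨le_rfl, hu i hin⟩
  have hu' : u i ∈ Set.Icc 0 (u i) := ⟨hu i hin, le_rfl⟩
  simp only [hg_low i hik]
  linarith [integral_max_sub_le_of_concaveOn (hu i hin) hε (hf_cont i hin) (hf_conc i hin)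
    (hf_nonneg i hin 0 h0) (hf_nonneg i hin _ hu') (hh i hin)]

lemma sum_range_lt_add_of_isLeast {n k : ℕ} {a : ℕ → ℝ} {c M : ℝ} (hc : 0 < c)
    (hk : IsLeast {k | k ≤ n ∧ c ≤ ∑ i ∈ range k, a i} k) (ha : ∀ i < n, a i < M) :
    ∑ i ∈ range k, a i < c + M := by
  obtain ⟨⟨hkn, hck⟩, hmin⟩ := hk
  obtain ⟨m, rfl⟩ : ∃ m, k = m + 1 := Nat.exists_eq_succ_of_ne_zero <| by
    rintro rfl
    rw [sum_range_zero] at hck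
    linarith
  have hm : ∑ i ∈ range m, a i < c := by
    by_contra! hcm
    exact Nat.not_succ_le_self m (hmin ⟨by omega, hcm⟩)
  rw [sum_range_succ]
  linarith [ha m (by omega)]

lemma sum_mul_le_of_antitone {n j : ℕ} {u y h : ℕ → ℝ} (hj : j < n)
    (hy : ∀ i < n, y i ∈ Set.Icc 0 (u i)) (hh : ∀ i j, i ≤ j → j < n → h j ≤ h i) :
    ∑ i ∈ range n, y i * h i ≤
      ∑ i ∈ range j, u i * h i + h j * (∑ i ∈ range n, y i - ∑ i ∈ range j, u i) := by
  have hhead : ∑ i ∈ range j, y i * (h i - h j) ≤ ∑ i ∈ range j, u i * (h i - h j) :=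
    sum_le_sum fun i hi => by
      have hi := mem_range.1 hi
      exact mul_le_mul_of_nonneg_right (hy i (by omega)).2 (sub_nonneg.2 (hh i j hi.le hj))
  have htail : ∑ i ∈ Ico j n, y i * (h i - h j) ≤ 0 :=
    sum_nonpos fun i hi => by
      have hi := mem_Ico.1 hi
      exact mul_nonpos_of_nonneg_of_nonpos (hy i hi.2).1 (sub_nonpos.2 (hh j i hi.1 hi.2))
  have hsplit := sum_range_add_sum_Ico (fun i => y i * (h i - h j)) hj.le
  simp only [mul_sub, sum_sub_distrib, ← sum_mul] at hhead htail hsplit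
  linarith

lemma mul_le_sum_mul_of_nash {n k : ℕ} {u h x : ℕ → ℝ} {g : ℕ → ℝ → ℝ} {ε opt N : ℝ}
    (hkn : k ≤ n) (hε : 0 ≤ ε) (hx : ∀ i < n, x i ∈ Set.Icc 0 (u i))
    (hxN : ∑ i ∈ range n, x i = N)
    (hnash : ∀ i < n, ∀ j < n, 0 < x i → x j < u j → g j (x j) ≤ g i (x i))
    (hg_low : ∀ i < k, ∀ t, ε * h i ≤ g i t) (hg_nonneg : ∀ i < n, k ≤ i → 0 ≤ g i (x i))
    (hk_opt : opt ≤ ∑ i ∈ range k, u i * h i)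
    (hopt : ∀ j < n, opt ≤ ∑ i ∈ range j, u i * h i + h j * (N - ∑ i ∈ range j, u i)) :
    ε * opt ≤ ∑ i ∈ range n, x i * g i (x i) := by
  have hprefix : ∀ {j}, j ≤ k → (∀ i < j, x i = u i) →
      ε * ∑ i ∈ range j, u i * h i ≤ ∑ i ∈ range j, x i * g i (x i) := fun hjk hfull => by
    rw [mul_sum]
    refine sum_le_sum fun i hi => ?_
    have hij := mem_range.1 hi
    have hin : i < n := by omega
    rw [hfull i hij, mul_left_comm]
    exact mul_le_mul_of_nonneg_left (hg_low i (by omega) _) ((hx i hin).1.trans (hx i hin).2)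
  by_cases hfull : ∀ i < k, x i = u i
  · calc ε * opt ≤ ε * ∑ i ∈ range k, u i * h i := by gcongr
      _ ≤ ∑ i ∈ range k, x i * g i (x i) := hprefix le_rfl hfull
      _ ≤ ∑ i ∈ range n, x i * g i (x i) :=
        sum_le_sum_of_subset_of_nonneg (range_subset_range.2 hkn) fun i hi hik => by
          simp only [mem_range, not_lt] at hi hik
          exact mul_nonneg (hx i hi).1 (hg_nonneg i hi hik)
  push Not at hfull
  classical
  obtain ⟨hjk, hxj⟩ := Nat.find_spec hfull
  set j := Nat.find hfull
  have hjn : j < n := hjk.trans_le hkn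
  have hxj : x j < u j := (hx j hjn).2.lt_of_ne hxj
  have hfilled : ∀ i < j, x i = u i := fun i hi => by
    by_contra hne
    exact Nat.find_min hfull hi ⟨by omega, hne⟩
  have htail : ∑ i ∈ Ico j n, x i = N - ∑ i ∈ range j, u i := by
    rw [← hxN, ← sum_range_add_sum_Ico _ hjn.le,
      sum_congr rfl fun i hi => hfilled i (mem_range.1 hi)]
    ring
  calc ε * opt ≤ ε * ∑ i ∈ range j, u i * h i + ε * h j * ∑ i ∈ Ico j n, x i := by
        rw [htail, mul_assoc, ← mul_add]
        exact mul_le_mul_of_nonneg_left (hopt j hjn) hε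
    _ ≤ ∑ i ∈ range j, x i * g i (x i) + ∑ i ∈ Ico j n, x i * g i (x i) := by
        refine add_le_add (hprefix hjk.le hfilled) ?_
        rw [mul_sum]
        refine sum_le_sum fun i hi => ?_
        have hi := (mem_Ico.1 hi).2
        rcases (hx i hi).1.eq_or_lt with h0 | h0
        · simp [← h0]
        rw [mul_comm]
        exact mul_le_mul_of_nonneg_left ((hg_low j hjk _).trans (hnash i hi j hjn h0 hxj)) h0.le
    _ = ∑ i ∈ range n, x i * g i (x i) := sum_range_add_sum_Ico _ hjn.le

theorem no_critical_location_case_general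
    (n : ℕ) (u : ℕ → ℝ) (hu : ∀ i < n, 0 < u i)
    (f : ℕ → ℝ → ℝ)
    (hf_nonneg : ∀ i < n, ∀ t ∈ Set.Icc 0 (u i), 0 ≤ f i t)
    (hf_cont : ∀ i < n, ContinuousOn (f i) (Set.Icc 0 (u i)))
    (hf_conc : ∀ i < n, ConcaveOn ℝ (Set.Icc 0 (u i)) (f i))
    (N : ℝ)
    (opt : ℝ)
    (hopt : IsGreatest {w : ℝ | ∃ x : ℕ → ℝ,
      (∀ i < n, x i ∈ Set.Icc 0 (u i)) ∧ (∑ i ∈ Finset.range n, x i) = N ∧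
      w = ∑ i ∈ Finset.range n, x i * f i (x i)} opt)
    (hopt_pos : 0 < opt)
    (h : ℕ → ℝ) (hh : ∀ i < n, IsGreatest (f i '' Set.Icc 0 (u i)) (h i))
    (hsorted : ∀ i j, i ≤ j → j < n → h j ≤ h i)
    (φ : ℝ) (hφ : φ = (Real.sqrt 5 - 1) / 2)
    (hnocrit : ∀ i < n, u i * h i < φ * opt)
    (kstar : ℕ)
    (hkstar : IsLeast {k | k ≤ n ∧ opt ≤ ∑ i ∈ Finset.range k, u i * h i} kstar)
    (ε : ℝ) (hε : ε ∈ Set.Ioc (0 : ℝ) 1)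
    (g : ℕ → ℝ → ℝ)
    (hg_low : ∀ i < kstar, ∀ t, g i t = max (f i t) (ε * h i))
    (hg_high : ∀ i, kstar ≤ i → g i = f i) :
    ((∑ i ∈ Finset.range n, ∫ t in (0 : ℝ)..(u i), (g i t - f i t)) ≤
        (1 + φ) / 2 * ε ^ 2 * opt ∧
      (1 + φ) / 2 * ε ^ 2 * opt ≤ 0.81 * ε ^ 2 * opt) ∧
    (∀ x : ℕ → ℝ,
      (∀ i < n, x i ∈ Set.Icc 0 (u i)) → (∑ i ∈ Finset.range n, x i) = N →
      (∀ i < n, ∀ j < n, 0 < x i → x j < u j → g j (x j) ≤ g i (x i)) →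
      ε * opt ≤ ∑ i ∈ Finset.range n, x i * g i (x i)) := by
  have hkn := hkstar.1.1
  have hcost := sum_integral_sub_le_mul_sum hkn ⟨hε.1.le, hε.2⟩ (fun i hi => (hu i hi).le)
    hf_nonneg hf_cont hf_conc hh hg_low hg_high
  have hk_sum := sum_range_lt_add_of_isLeast hopt_pos hkstar hnocrit
  have hφ_le : (1 + φ) / 2 ≤ 0.81 := by
    rw [hφ]
    nlinarith [Real.sq_sqrt (show (0 : ℝ) ≤ 5 by norm_num), Real.sqrt_nonneg 5]
  refine ⟨⟨?_, by gcongr⟩, fun x hx hxN hnash => ?_⟩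
  · calc _ ≤ ε ^ 2 / 2 * ∑ i ∈ range kstar, u i * h i := hcost
      _ ≤ ε ^ 2 / 2 * (opt + φ * opt) := by gcongr
      _ = (1 + φ) / 2 * ε ^ 2 * opt := by ring
  obtain ⟨y, hy, hyN, hopt_eq⟩ := hopt.1
  refine mul_le_sum_mul_of_nash hkn hε.1.le hx hxN hnash
    (fun i hi t => hg_low i hi t ▸ le_max_right _ _)
    (fun i hi hki => hg_high i hki ▸ hf_nonneg i hi _ (hx i hi)) hkstar.1.2 fun j hj => ?_
  calc opt ≤ ∑ i ∈ range n, y i * h i := hopt_eq ▸ sum_le_sum fun i hi =>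
        mul_le_mul_of_nonneg_left ((hh i (mem_range.1 hi)).2 ⟨y i, hy i (mem_range.1 hi), rfl⟩)
          (hy i (mem_range.1 hi)).1
    _ ≤ _ := hyN ▸ sum_mul_le_of_antitone hj hy hsorted

/-- If no location is critical (`u_i·h_i < φ·opt` for all `i`, with the
locations sorted so that `h_1 ≥ ⋯ ≥ h_n`), then raising `f_i` to target `ε·h_i` for the
first `k*` locations (where `k*` is minimal with `∑_{i≤k*} u_i·h_i ≥ opt`) costs at most
`((1+φ)/2)·ε²·opt ≤ 0.81·ε²·opt`, and every Nash equilibrium of the modified instance has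
welfare at least `ε·opt`. (Locations are indexed `0,…,n-1`.) -/
theorem no_critical_location_case
    (n : ℕ) (u : ℕ → ℝ) (hu : ∀ i < n, 0 < u i)
    (f : ℕ → ℝ → ℝ)
    (hf_nonneg : ∀ i < n, ∀ t ∈ Set.Icc 0 (u i), 0 ≤ f i t)
    (hf_cont : ∀ i < n, ContinuousOn (f i) (Set.Icc 0 (u i)))
    (hf_conc : ∀ i < n, ConcaveOn ℝ (Set.Icc 0 (u i)) (f i))
    (N : ℝ) (hN_lo : ∀ i < n, u i ≤ N) (hN_hi : N ≤ ∑ i ∈ Finset.range n, u i)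
    (opt : ℝ)
    (hopt : IsGreatest {w : ℝ | ∃ x : ℕ → ℝ,
      (∀ i < n, x i ∈ Set.Icc 0 (u i)) ∧ (∑ i ∈ Finset.range n, x i) = N ∧
      w = ∑ i ∈ Finset.range n, x i * f i (x i)} opt)
    (hopt_pos : 0 < opt)
    (h : ℕ → ℝ) (hh : ∀ i < n, IsGreatest (f i '' Set.Icc 0 (u i)) (h i))
    (hsorted : ∀ i j, i ≤ j → j < n → h j ≤ h i)
    (φ : ℝ) (hφ : φ = (Real.sqrt 5 - 1) / 2)
    (hnocrit : ∀ i < n, u i * h i < φ * opt)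
    (kstar : ℕ)
    (hkstar : IsLeast {k | k ≤ n ∧ opt ≤ ∑ i ∈ Finset.range k, u i * h i} kstar)
    (ε : ℝ) (hε : ε ∈ Set.Ioc (0 : ℝ) 1)
    (g : ℕ → ℝ → ℝ)
    (hg_low : ∀ i < kstar, ∀ t, g i t = max (f i t) (ε * h i))
    (hg_high : ∀ i, kstar ≤ i → g i = f i) :
    ((∑ i ∈ Finset.range n, ∫ t in (0 : ℝ)..(u i), (g i t - f i t)) ≤
        (1 + φ) / 2 * ε ^ 2 * opt ∧
      (1 + φ) / 2 * ε ^ 2 * opt ≤ 0.81 * ε ^ 2 * opt) ∧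
    (∀ x : ℕ → ℝ,
      (∀ i < n, x i ∈ Set.Icc 0 (u i)) → (∑ i ∈ Finset.range n, x i) = N →
      (∀ i < n, ∀ j < n, 0 < x i → x j < u j → g j (x j) ≤ g i (x i)) →
      ε * opt ≤ ∑ i ∈ Finset.range n, x i * g i (x i)) :=
  no_critical_location_case_general n u hu f hf_nonneg hf_cont hf_conc N opt hopt hopt_pos h hh
    hsorted φ hφ hnocrit kstar hkstar ε hε g hg_low hg_high
end

section
/- Consider the two-neighbourhood urban planning instance with capacities u_1 = u_2 = 1, total population N = 1, and utility functions f_1(t) = 1 − t and f_2(t) = 0 on [0,1], so that opt = 1/4. For ε ∈ (0,1], define g_1(t) = max(1 − t, ε/4) and g_2 = f_2 = 0. Then the modification cost is ∫_0^1 (g_1(t) − f_1(t)) dt = ε²/32, the unique Nash equilibrium of the modified instance is (x_1, x_2) = (1, 0), and its welfare equals ε/4 = ε·opt. -/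
/-- In the two-neighbourhood instance with `u₁ = u₂ = 1`, `N = 1`,
`f₁(t) = 1 − t`, `f₂ = 0` (so `opt = 1/4`), the modification `g₁(t) = max(1−t, ε/4)`,
`g₂ = 0` has cost `∫₀¹ (g₁ − f₁) = ε²/32`; the unique Nash equilibrium of the modified
instance is `(1, 0)`, and its welfare is `ε/4 = ε·opt`. -/
theorem lower_bound_construction (ε : ℝ) (hε : ε ∈ Set.Ioc (0 : ℝ) 1)
    (g₁ g₂ : ℝ → ℝ)
    (hg₁ : ∀ t, g₁ t = max (1 - t) (ε / 4))
    (hg₂ : ∀ t, g₂ t = 0) :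
    (∫ t in (0 : ℝ)..1, (g₁ t - (1 - t))) = ε ^ 2 / 32 ∧
    (∀ x₁ x₂ : ℝ, x₁ ∈ Set.Icc (0 : ℝ) 1 → x₂ ∈ Set.Icc (0 : ℝ) 1 → x₁ + x₂ = 1 →
      (((0 < x₁ → x₂ < 1 → g₂ x₂ ≤ g₁ x₁) ∧ (0 < x₂ → x₁ < 1 → g₁ x₁ ≤ g₂ x₂)) ↔
        (x₁ = 1 ∧ x₂ = 0))) ∧
    1 * g₁ 1 + 0 * g₂ 0 = ε * (1 / 4) := by
  obtain ⟨hε0, hε1⟩ := hε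
  refine ⟨?_, ?_, ?_⟩
  · set a : ℝ := 1 - ε / 4 with ha'
    have ha0 : (0:ℝ) ≤ a := by simp only [ha']; linarith
    have ha1 : a ≤ 1 := by simp only [ha']; linarith
    have key : ∀ t : ℝ, g₁ t - (1 - t) = max 0 (t - a) := by
      intro t
      rw [hg₁, ha']
      rcases le_total (1 - t) (ε / 4) with h | h
      · rw [max_eq_right h, max_eq_right (by linarith)]; ring
      · rw [max_eq_left h, max_eq_left (by linarith)]; ring
    simp only [key]
    have hint : ∀ b c : ℝ, IntervalIntegrable (fun t => max 0 (t - a))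
        MeasureTheory.volume b c :=
      fun b c => (Continuous.max continuous_const (by continuity)).intervalIntegrable b c
    rw [← intervalIntegral.integral_add_adjacent_intervals (hint 0 a) (hint a 1)]
    have h1 : (∫ t in (0:ℝ)..a, max 0 (t - a)) = 0 := by
      rw [intervalIntegral.integral_congr (g := fun _ => (0:ℝ)) ?_]
      · simp
      · intro t ht
        rw [Set.uIcc_of_le ha0] at ht
        exact max_eq_left (by linarith [ht.2])
    have h2 : (∫ t in a..(1:ℝ), max 0 (t - a)) = ε ^ 2 / 32 := by
      rw [intervalIntegral.integral_congr (g := fun t => t - a) ?_]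
      · rw [intervalIntegral.integral_comp_sub_right (fun x => x) a, integral_id]
        simp only [ha']
        ring
      · intro t ht
        rw [Set.uIcc_of_le ha1] at ht
        exact max_eq_right (by linarith [ht.1])
    rw [h1, h2]; ring
  · intro x₁ x₂ h1 h2 hsum
    constructor
    · rintro ⟨hA, hB⟩
      by_contra hne
      have hx2 : 0 < x₂ := by
        rcases h2.1.lt_or_eq with h | h
        · exact h
        · exact absurd ⟨by linarith, h.symm⟩ hne
      have hle := hB hx2 (by linarith)
      rw [hg₁, hg₂] at hle
      have : ε / 4 ≤ 0 := le_trans (le_max_right _ _) hle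
      linarith
    · rintro ⟨e1, e2⟩
      subst e1; subst e2
      constructor
      · intro _ _
        rw [hg₁, hg₂]
        exact le_trans (by linarith) (le_max_right _ _)
      · intro h _; linarith
  · rw [hg₁, hg₂, show (1:ℝ) - 1 = 0 from by ring, max_eq_right (by linarith)]
    ring
end

section
/- Consider the donut instance: 11 neighbourhoods consisting of one inner-city neighbourhood with capacity 1000 and utility function f_R, and ten suburban neighbourhoods each with capacity 100 and utility function f_B, with total population N = 1000, where f_R(t) = 25 + 3t/20 for t ∈ [0,500] and f_R(t) = 200 − t/5 for t ∈ [500,1000], and f_B(t) = 26 + 3t/2 for t ∈ [0,50], f_B(t) = 101 − (43/31)(t−50) for t ∈ [50,81], and f_B(t) = 301 − 3t for t ∈ [81,100]. Then the configuration with inner-city population 160 and population 84 in each suburban neighbourhood is a Nash equilibrium; in this equilibrium every agent's utility equals 49 (indeed f_R(160) = f_B(84) = 49), so its social welfare is 49000. -/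
/-- In the donut instance (neighbourhood `0` is the inner city with capacity
`1000` and utility `f_R`; neighbourhoods `1,…,10` are suburbs of capacity `100` with utility
`f_B`; total population `N = 1000`), the configuration with inner-city population `160` and
`84` in each suburb is a Nash equilibrium; every agent's utility equals `49`
(`f_R(160) = f_B(84) = 49`), so the social welfare is `49000`. -/
theorem donut_equilibrium
    (fR fB : ℝ → ℝ)
    (hfR_lo : ∀ t ∈ Set.Icc (0 : ℝ) 500, fR t = 25 + 3 * t / 20)
    (hfR_hi : ∀ t ∈ Set.Icc (500 : ℝ) 1000, fR t = 200 - t / 5)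
    (hfB_lo : ∀ t ∈ Set.Icc (0 : ℝ) 50, fB t = 26 + 3 * t / 2)
    (hfB_mid : ∀ t ∈ Set.Icc (50 : ℝ) 81, fB t = 101 - 43 / 31 * (t - 50))
    (hfB_hi : ∀ t ∈ Set.Icc (81 : ℝ) 100, fB t = 301 - 3 * t)
    (u : Fin 11 → ℝ) (hu0 : u 0 = 1000) (hui : ∀ i : Fin 11, i ≠ 0 → u i = 100)
    (f : Fin 11 → ℝ → ℝ) (hf0 : f 0 = fR) (hfi : ∀ i : Fin 11, i ≠ 0 → f i = fB)
    (x : Fin 11 → ℝ) (hx0 : x 0 = 160) (hxi : ∀ i : Fin 11, i ≠ 0 → x i = 84) :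
    (∀ i, x i ∈ Set.Icc 0 (u i)) ∧ (∑ i, x i) = 1000 ∧
    (∀ i j : Fin 11, 0 < x i → x j < u j → f j (x j) ≤ f i (x i)) ∧
    fR 160 = 49 ∧ fB 84 = 49 ∧ (∑ i, x i * f i (x i)) = 49000 := by
  have hR : fR 160 = 49 := by
    rw [hfR_lo 160 (by norm_num)]; norm_num
  have hB : fB 84 = 49 := by
    rw [hfB_hi 84 (by norm_num)]; norm_num
  have hxval : ∀ i : Fin 11, x i = 160 ∨ x i = 84 := by
    intro i
    by_cases h : i = 0
    · left; rw [h, hx0]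
    · right; exact hxi i h
  have hfval : ∀ i : Fin 11, f i (x i) = 49 := by
    intro i
    by_cases h : i = 0
    · rw [h, hf0, hx0, hR]
    · rw [hfi i h, hxi i h, hB]
  refine ⟨?_, ?_, ?_, hR, hB, ?_⟩
  · intro i
    by_cases h : i = 0
    · rw [h, hx0, hu0]; constructor <;> norm_num
    · rw [hxi i h, hui i h]; constructor <;> norm_num
  · rw [Fin.sum_univ_succ]
    have : ∀ i : Fin 10, x i.succ = 84 := fun i => hxi i.succ (Fin.succ_ne_zero i)
    simp only [this, hx0, Finset.sum_const, Finset.card_univ, Fintype.card_fin]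
    norm_num
  · intro i j _ _
    rw [hfval i, hfval j]
  · have : ∀ i : Fin 11, x i * f i (x i) = x i * 49 := fun i => by rw [hfval i]
    simp only [this]
    rw [← Finset.sum_mul, Fin.sum_univ_succ]
    have h84 : ∀ i : Fin 10, x i.succ = 84 := fun i => hxi i.succ (Fin.succ_ne_zero i)
    simp only [h84, hx0, Finset.sum_const, Finset.card_univ, Fintype.card_fin]
    norm_num
end

section
/- In the donut instance (one inner-city neighbourhood, capacity 1000, utility f_R; ten suburban neighbourhoods, capacity 100 each, utility f_B; total population N = 1000, with f_R(t) = 25 + 3t/20 on [0,500], f_R(t) = 200 − t/5 on [500,1000], and f_B(t) = 26 + 3t/2 on [0,50], f_B(t) = 101 − (43/31)(t−50) on [50,81], f_B(t) = 301 − 3t on [81,100]): for every real x with 16 < x ≤ 50 one has f_B(100 − x) > f_R(10x). Consequently, no configuration of the form (10x, 100−x, …, 100−x) with 16 < x ≤ 50 is a Nash equilibrium, since agents in the inner city strictly prefer to move to a suburb. -/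
/-- In the donut instance, for every `x` with `16 < x ≤ 50` one has
`f_B(100 − x) > f_R(10x)`; consequently no configuration of the form
`(10x, 100−x, …, 100−x)` with `16 < x ≤ 50` is a Nash equilibrium. -/
theorem donut_flight_dynamic
    (fR fB : ℝ → ℝ)
    (hfR_lo : ∀ t ∈ Set.Icc (0 : ℝ) 500, fR t = 25 + 3 * t / 20)
    (hfR_hi : ∀ t ∈ Set.Icc (500 : ℝ) 1000, fR t = 200 - t / 5)
    (hfB_lo : ∀ t ∈ Set.Icc (0 : ℝ) 50, fB t = 26 + 3 * t / 2)
    (hfB_mid : ∀ t ∈ Set.Icc (50 : ℝ) 81, fB t = 101 - 43 / 31 * (t - 50))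
    (hfB_hi : ∀ t ∈ Set.Icc (81 : ℝ) 100, fB t = 301 - 3 * t)
    (u : Fin 11 → ℝ) (hu0 : u 0 = 1000) (hui : ∀ i : Fin 11, i ≠ 0 → u i = 100)
    (f : Fin 11 → ℝ → ℝ) (hf0 : f 0 = fR) (hfi : ∀ i : Fin 11, i ≠ 0 → f i = fB) :
    ∀ x : ℝ, 16 < x → x ≤ 50 →
      fR (10 * x) < fB (100 - x) ∧
      (∀ y : Fin 11 → ℝ, y 0 = 10 * x → (∀ i : Fin 11, i ≠ 0 → y i = 100 - x) →
        ¬ (∀ i j : Fin 11, 0 < y i → y j < u j → f j (y j) ≤ f i (y i))) := by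
  intro x hx16 hx50
  have hR : fR (10 * x) = 25 + 3 * (10 * x) / 20 := by
    apply hfR_lo; constructor <;> nlinarith
  have key : fR (10 * x) < fB (100 - x) := by
    rcases le_or_gt (100 - x) 81 with h | h
    · have hB : fB (100 - x) = 101 - 43 / 31 * ((100 - x) - 50) := by
        apply hfB_mid; constructor <;> linarith
      rw [hR, hB]; nlinarith
    · have hB : fB (100 - x) = 301 - 3 * (100 - x) := by
        apply hfB_hi; constructor <;> linarith
      rw [hR, hB]; nlinarith
  refine ⟨key, ?_⟩
  intro y hy0 hyi hNE
  have h1 : (1 : Fin 11) ≠ 0 := by decide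
  have := hNE 0 1 (by rw [hy0]; linarith) (by rw [hyi 1 h1, hui 1 h1]; linarith)
  rw [hf0, hfi 1 h1, hy0, hyi 1 h1] at this
  linarith
end

section
/- In the donut instance (one inner-city neighbourhood, capacity 1000; ten suburban neighbourhoods, capacity 100 each, utility f_B with f_B(t) = 26 + 3t/2 on [0,50], f_B(t) = 101 − (43/31)(t−50) on [50,81], f_B(t) = 301 − 3t on [81,100]; total population N = 1000), replace the inner-city utility f_R (f_R(t) = 25 + 3t/20 on [0,500], f_R(t) = 200 − t/5 on [500,1000]) by g_R, where g_R(t) = 32 + 69t/500 for t ∈ [0,500] and g_R(t) = 202 − 101t/500 for t ∈ [500,1000]. Then: (i) g_R(t) ≥ f_R(t) for all t ∈ [0,1000]; (ii) for every real x with 16 ≤ x < 50 one has g_R(10x) > f_B(100 − x), so no configuration of the form (10x, 100−x, …, 100−x) with 16 ≤ x < 50 is a Nash equilibrium of the modified instance; and (iii) the configuration with inner-city population 500 and population 50 in each suburban neighbourhood is a Nash equilibrium of the modified instance in which every agent's utility equals 101 (indeed g_R(500) = f_B(50) = 101), strictly greater than the utility 49 that every agent receives at the equilibrium (160, 84, …,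 84) of the unmodified instance. -/
/-- In the donut instance, replacing the inner-city utility `f_R` by `g_R`
(through `(0,32), (500,101), (1000,0)`): (i) `g_R ≥ f_R` on `[0,1000]`; (ii) for all
`16 ≤ x < 50`, `g_R(10x) > f_B(100−x)`, so no configuration `(10x, 100−x, …, 100−x)` with
`16 ≤ x < 50` is a Nash equilibrium of the modified instance; (iii) the configuration
`(500, 50, …, 50)` is a Nash equilibrium of the modified instance in which every agent's
utility equals `101` (`g_R(500) = f_B(50) = 101`), strictly greater than the utility `49`
received by every agent at the equilibrium `(160, 84, …, 84)` of the unmodified instance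
(`f_R(160) = f_B(84) = 49`). -/
theorem donut_reversal
    (fR fB gR : ℝ → ℝ)
    (hfR_lo : ∀ t ∈ Set.Icc (0 : ℝ) 500, fR t = 25 + 3 * t / 20)
    (hfR_hi : ∀ t ∈ Set.Icc (500 : ℝ) 1000, fR t = 200 - t / 5)
    (hfB_lo : ∀ t ∈ Set.Icc (0 : ℝ) 50, fB t = 26 + 3 * t / 2)
    (hfB_mid : ∀ t ∈ Set.Icc (50 : ℝ) 81, fB t = 101 - 43 / 31 * (t - 50))
    (hfB_hi : ∀ t ∈ Set.Icc (81 : ℝ) 100, fB t = 301 - 3 * t)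
    (hgR_lo : ∀ t ∈ Set.Icc (0 : ℝ) 500, gR t = 32 + 69 * t / 500)
    (hgR_hi : ∀ t ∈ Set.Icc (500 : ℝ) 1000, gR t = 202 - 101 * t / 500)
    (u : Fin 11 → ℝ) (hu0 : u 0 = 1000) (hui : ∀ i : Fin 11, i ≠ 0 → u i = 100)
    (g : Fin 11 → ℝ → ℝ) (hg0 : g 0 = gR) (hgi : ∀ i : Fin 11, i ≠ 0 → g i = fB) :
    (∀ t ∈ Set.Icc (0 : ℝ) 1000, fR t ≤ gR t) ∧
    (∀ x : ℝ, 16 ≤ x → x < 50 →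
      fB (100 - x) < gR (10 * x) ∧
      (∀ y : Fin 11 → ℝ, y 0 = 10 * x → (∀ i : Fin 11, i ≠ 0 → y i = 100 - x) →
        ¬ (∀ i j : Fin 11, 0 < y i → y j < u j → g j (y j) ≤ g i (y i)))) ∧
    (∀ x : Fin 11 → ℝ, x 0 = 500 → (∀ i : Fin 11, i ≠ 0 → x i = 50) →
      (∀ i j : Fin 11, 0 < x i → x j < u j → g j (x j) ≤ g i (x i))) ∧
    gR 500 = 101 ∧ fB 50 = 101 ∧ fR 160 = 49 ∧ fB 84 = 49 ∧ (49 : ℝ) < 101 := by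
  have hg500 : gR 500 = 101 := by rw [hgR_lo 500 (by norm_num)]; norm_num
  have hfB50 : fB 50 = 101 := by rw [hfB_lo 50 (by norm_num)]; norm_num
  refine ⟨?_, ?_, ?_, hg500, hfB50, ?_, ?_, by norm_num⟩
  · intro t ht
    rcases le_or_gt t 500 with h | h
    · rw [hfR_lo t ⟨ht.1, h⟩, hgR_lo t ⟨ht.1, h⟩]; linarith
    · rw [hfR_hi t ⟨h.le, ht.2⟩, hgR_hi t ⟨h.le, ht.2⟩]; linarith [ht.2]
  · intro x hx1 hx2
    have hkey : fB (100 - x) < gR (10 * x) := by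
      have hg : gR (10 * x) = 32 + 69 * (10 * x) / 500 :=
        hgR_lo _ ⟨by linarith, by linarith⟩
      rcases le_or_gt x 19 with h | h
      · rw [hfB_hi (100 - x) ⟨by linarith, by linarith⟩, hg]; linarith
      · rw [hfB_mid (100 - x) ⟨by linarith, by linarith⟩, hg]; linarith
    refine ⟨hkey, ?_⟩
    intro y hy0 hyi hnash
    have h1 : (1 : Fin 11) ≠ 0 := by decide
    have := hnash 1 0 (by rw [hyi 1 h1]; linarith) (by rw [hy0, hu0]; linarith)
    rw [hg0, hgi 1 h1, hy0, hyi 1 h1] at this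
    linarith
  · intro x hx0 hxi i j _ _
    have hval : ∀ k : Fin 11, g k (x k) = 101 := by
      intro k
      by_cases hk : k = 0
      · subst hk; rw [hg0, hx0, hg500]
      · rw [hgi k hk, hxi k hk, hfB50]
    rw [hval i, hval j]
  · rw [hfR_lo 160 (by norm_num)]; norm_num
  · rw [hfB_hi 84 (by norm_num)]; norm_num
end
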